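/- (Atomic estimate for 𝓜_R) Let X be a Banach space and suppose 𝓜_R : L^p(ℝⁿ; X) → L^p(ℝⁿ; ℒ(ℓ²(Δ), Rad(X))) is bounded for some p ∈ (1,∞). Let a be a dyadic X-valued atom: supp a ⊆ Q for a dyadic cube Q, ‖a‖_∞ ≤ |Q|^{−1}, and ∫ a(x) dx = 0. Then ‖𝓜_R a‖_{L¹(ℝⁿ; ℒ(ℓ², Rad(X)))} ≲ 1, with constant independent of the atom. Consequently 𝓜_R is bounded from the dyadic atomic H¹(ℝⁿ; X) to L¹. -/

import Mathlib

open MeasureTheory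
open scoped ENNReal

noncomputable section

/-- Expectation `E‖∑_{i∈s} ε_i f i‖` over independent random signs indexed by the finset `s`. -/
def radE {ι X : Type*} [DecidableEq ι] [NormedAddCommGroup X]
    (s : Finset ι) (f : ι → X) : ℝ :=
  ((2 : ℝ) ^ s.card)⁻¹ *
    ∑ σ : {i // i ∈ s} → Bool, ‖∑ i : {i // i ∈ s}, (if σ i then f i.1 else - f i.1)‖

/-- The dyadic cube of side `2^k` indexed by `m ∈ ℤⁿ`, i.e. `2^k([0,1)ⁿ + m)`. -/
def dyadicCube (n : ℕ) (k : ℤ) (m : Fin n → ℤ) : Set (Fin n → ℝ) :=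
  {x | ∀ i, (2 : ℝ) ^ k * (m i : ℝ) ≤ x i ∧ x i < (2 : ℝ) ^ k * ((m i : ℝ) + 1)}

/-- The integral average `⟨u⟩_S = |S|⁻¹ ∫_S u` of a vector-valued function over a set. -/
def setAvg (n : ℕ) {X : Type*} [NormedAddCommGroup X] [NormedSpace ℝ X]
    (S : Set (Fin n → ℝ)) (u : (Fin n → ℝ) → X) : X :=
  ((volume S).toReal)⁻¹ • ∫ y in S, u y

/-- `A_{2^k} u (x)`: the average of `u` over the dyadic cube of side `2^k` containing `x`. -/
def dyadicAvg (n : ℕ) {X : Type*} [NormedAddCommGroup X] [NormedSpace ℝ X]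
    (u : (Fin n → ℝ) → X) (k : ℤ) (x : Fin n → ℝ) : X :=
  setAvg n (dyadicCube n k (fun i => ⌊x i / (2 : ℝ) ^ k⌋)) u

/-- The Rademacher maximal function
`M_R u (x) = sup { E‖∑_k ε_k λ_k A_{2^k}u(x)‖ : λ finitely nonzero, ‖λ‖_{ℓ²} ≤ 1 }`. -/
def rademacherMaximal (n : ℕ) {X : Type*} [NormedAddCommGroup X] [NormedSpace ℝ X]
    (u : (Fin n → ℝ) → X) (x : Fin n → ℝ) : ℝ :=
  ⨆ p : {p : Finset ℤ × (ℤ → ℝ) // ∑ k ∈ p.1, (p.2 k) ^ 2 ≤ 1},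
    radE p.1.1 (fun k => p.1.2 k • dyadicAvg n u k x)

/-- The dyadic Hardy–Littlewood maximal function `M u (x) = sup_{Q ∋ x} ‖⟨u⟩_Q‖`. -/
def dyadicMaximal (n : ℕ) {X : Type*} [NormedAddCommGroup X] [NormedSpace ℝ X]
    (u : (Fin n → ℝ) → X) (x : Fin n → ℝ) : ℝ :=
  ⨆ k : ℤ, ‖dyadicAvg n u k x‖

/-!
A dyadic atom `a` on the cube `Q` has mean zero, so its average over a dyadic cube `Q'` vanishes
unless `Q' ⊊ Q`. Hence its Rademacher maximal function lives on `Q`, and Hölder's inequality on `Q`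
turns the assumed `Lᵖ` bound into
`‖M_R a‖₁ ≤ |Q|^{1-1/p} ‖M_R a‖_p ≤ C |Q|^{1-1/p} ‖a‖_p ≤ C`.

The real supremum defining `M_R` is junk where the Rademacher sums are unbounded, so the estimate
is run for the `ℝ≥0∞`-valued supremum over the scales `[-K, K]`, and `K → ∞` by monotone
convergence. On those scales `a` may be replaced by its dyadic step approximation `A_c a`,
`c ≤ -K`, whose Rademacher sums are bounded (below scale `c` the averages are constant, which
Khintchine's inequality handles, and above the scale of `Q` they vanish), so the hypothesis
applies to `A_c a`. Sums of atoms follow by subadditivity of the Rademacher sums.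
-/

section Rademacher

variable {ι X : Type*} [DecidableEq ι] [NormedAddCommGroup X]

lemma radE_nonneg (s : Finset ι) (f : ι → X) : 0 ≤ radE s f := by
  unfold radE; positivity

lemma radE_congr {s : Finset ι} {f g : ι → X} (h : ∀ i ∈ s, f i = g i) :
    radE s f = radE s g := by
  unfold radE
  congr! 4 with σ _ i
  rw [h i.1 i.2]

lemma radE_eq_zero {s : Finset ι} {f : ι → X} (h : ∀ i ∈ s, f i = 0) : radE s f = 0 := by
  rw [radE_congr h]
  simp [radE]

lemma radE_le_sum_norm (s : Finset ι) (f : ι → X) : radE s f ≤ ∑ i ∈ s, ‖f i‖ := by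
  have hσ (σ : {i // i ∈ s} → Bool) :
      ‖∑ i : {i // i ∈ s}, (if σ i then f i.1 else -f i.1)‖ ≤ ∑ i ∈ s, ‖f i‖ := by
    refine (norm_sum_le _ _).trans_eq ?_
    rw [← Finset.sum_coe_sort s]
    exact Fintype.sum_congr _ _ fun i => by split_ifs <;> simp
  unfold radE
  rw [inv_mul_le_iff₀ (by positivity)]
  refine (Finset.sum_le_sum fun σ _ => hσ σ).trans_eq ?_
  simp [Finset.card_univ]

lemma radE_add_le (s : Finset ι) (f g : ι → X) :
    radE s (f + g) ≤ radE s f + radE s g := by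
  unfold radE
  rw [← mul_add, ← Finset.sum_add_distrib]
  gcongr with σ
  refine (norm_add_le _ _).trans_eq' ?_
  rw [← Finset.sum_add_distrib]
  congr! 2 with i
  split_ifs <;> simp [add_comm]

lemma radE_sum_le {κ : Type*} (t : Finset κ) (s : Finset ι) (F : κ → ι → X) :
    radE s (∑ j ∈ t, F j) ≤ ∑ j ∈ t, radE s (F j) := by
  classical
  induction t using Finset.induction_on with
  | empty => simp [radE_eq_zero]
  | insert j t hj ih =>
    rw [Finset.sum_insert hj, Finset.sum_insert hj]
    exact (radE_add_le _ _ _).trans (by gcongr)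

variable [NormedSpace ℝ X]

lemma radE_smul (s : Finset ι) (c : ℝ) (f : ι → X) :
    radE s (c • f) = |c| * radE s f := by
  have hσ (σ : {i // i ∈ s} → Bool) :
      ‖∑ i : {i // i ∈ s}, (if σ i then (c • f) i.1 else -(c • f) i.1)‖
        = |c| * ‖∑ i : {i // i ∈ s}, (if σ i then f i.1 else -f i.1)‖ := by
    rw [← Real.norm_eq_abs, ← norm_smul, Finset.smul_sum]
    congr! 2 with i
    split_ifs <;> simp
  simp only [radE, hσ, ← Finset.mul_sum]
  ring

end Rademacher

section Khintchine

variable {ι : Type*} [Fintype ι] [DecidableEq ι]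

lemma sum_sign_mul_sign (i j : ι) :
    ∑ σ : ι → Bool, (if σ i then (1 : ℝ) else -1) * (if σ j then 1 else -1)
      = if i = j then 2 ^ Fintype.card ι else 0 := by
  split_ifs with hij
  · subst hij
    simp [apply_ite (fun x : ℝ => x * x)]
  · -- flipping the sign `σ i` is a bijection of the sign patterns that negates every term
    have hflip : Function.Involutive fun σ : ι → Bool => Function.update σ i (!σ i) := by
      intro σ
      ext k
      by_cases hk : k = i
      · subst hk; simp
      · simp [Function.update_of_ne hk]
    have := Equiv.sum_comp hflip.toPerm
      fun σ : ι → Bool => (if σ i then (1 : ℝ) else -1) * (if σ j then 1 else -1)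
    simp only [Function.Involutive.coe_toPerm, Function.update_self,
      Function.update_of_ne (Ne.symm hij)] at this
    have hneg (σ : ι → Bool) : (if (!σ i) = true then (1 : ℝ) else -1) * (if σ j then 1 else -1)
        = -((if σ i then (1 : ℝ) else -1) * (if σ j then 1 else -1)) := by
      cases σ i <;> cases σ j <;> simp
    simp only [hneg, Finset.sum_neg_distrib] at this
    linarith

lemma sum_sq_sum_sign_mul (μ : ι → ℝ) :
    ∑ σ : ι → Bool, (∑ i, (if σ i then (1 : ℝ) else -1) * μ i) ^ 2
      = 2 ^ Fintype.card ι * ∑ i, μ i ^ 2 := by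
  have hterm (i j : ι) : ∑ σ : ι → Bool,
      (if σ i then (1 : ℝ) else -1) * μ i * ((if σ j then (1 : ℝ) else -1) * μ j)
        = μ i * μ j * if i = j then 2 ^ Fintype.card ι else 0 := by
    rw [← sum_sign_mul_sign, Finset.mul_sum]
    exact Finset.sum_congr rfl fun σ _ => by ring
  simp_rw [sq, Finset.sum_mul_sum, Finset.sum_comm (γ := ι → Bool), hterm, mul_ite, mul_zero,
    Finset.sum_ite_eq, Finset.mem_univ, if_true, Finset.mul_sum]
  exact Finset.sum_congr rfl fun i _ => by ring

end Khintchine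

/-- Khintchine's inequality with constant `1`, by Cauchy–Schwarz and the orthogonality of the
signs. -/
lemma radE_smul_const_le {ι X : Type*} [DecidableEq ι] [NormedAddCommGroup X] [NormedSpace ℝ X]
    (s : Finset ι) (μ : ι → ℝ) (w : X) :
    radE s (fun i => μ i • w) ≤ √(∑ i ∈ s, μ i ^ 2) * ‖w‖ := by
  set Z : ({i // i ∈ s} → Bool) → ℝ := fun σ => ∑ i, (if σ i then 1 else -1) * μ i
  have hnorm (σ : {i // i ∈ s} → Bool) :
      ‖∑ i : {i // i ∈ s}, (if σ i then μ i.1 • w else -(μ i.1 • w))‖ = |Z σ| * ‖w‖ := by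
    rw [← Real.norm_eq_abs, ← norm_smul, Finset.sum_smul]
    congr! 2 with i
    split_ifs <;> simp
  have hZ : ((2 : ℝ) ^ s.card)⁻¹ * ∑ σ, |Z σ| ≤ √(∑ i ∈ s, μ i ^ 2) := by
    rw [Real.le_sqrt (by positivity) (by positivity)]
    have hcs := sq_sum_le_card_mul_sum_sq (s := Finset.univ) (f := fun σ => |Z σ|)
    have hsq := sum_sq_sum_sign_mul (fun i : {i // i ∈ s} => μ i)
    simp only [sq_abs, Finset.card_univ, Fintype.card_fun, Fintype.card_bool,
      Fintype.card_coe, Nat.cast_pow, Nat.cast_ofNat] at hcs hsq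
    rw [Finset.sum_coe_sort s (fun i => μ i ^ 2)] at hsq
    calc (((2 : ℝ) ^ s.card)⁻¹ * ∑ σ, |Z σ|) ^ 2
        = (((2 : ℝ) ^ s.card)⁻¹) ^ 2 * (∑ σ, |Z σ|) ^ 2 := mul_pow _ _ _
      _ ≤ (((2 : ℝ) ^ s.card)⁻¹) ^ 2 * (2 ^ s.card * ∑ σ, Z σ ^ 2) := by gcongr
      _ = ∑ i ∈ s, μ i ^ 2 := by rw [hsq]; field_simp
  unfold radE
  simp only [hnorm, ← Finset.sum_mul, ← mul_assoc]
  gcongr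

lemma bddAbove_radE_of_eventually_const {X : Type*} [NormedAddCommGroup X] [NormedSpace ℝ X]
    {v : ℤ → X} {c d : ℤ} (hlow : ∀ k ≤ c, v k = v c) (hhigh : ∀ k, d ≤ k → v k = 0) :
    BddAbove (Set.range fun q : {q : Finset ℤ × (ℤ → ℝ) // ∑ k ∈ q.1, q.2 k ^ 2 ≤ 1} =>
      radE q.1.1 fun k => q.1.2 k • v k) := by
  refine ⟨‖v c‖ + ∑ k ∈ Finset.Ico c d, ‖v k‖, ?_⟩
  rintro _ ⟨⟨⟨s, μ⟩, hμ⟩, rfl⟩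
  dsimp only at hμ ⊢
  set g₁ : ℤ → X := fun k => (if k < c then μ k else 0) • v c
  set g₂ : ℤ → X := fun k => if k ∈ Finset.Ico c d then μ k • v k else 0
  have hsplit : radE s (fun k => μ k • v k) = radE s (g₁ + g₂) := radE_congr fun k _ => by
    by_cases hkc : k < c
    · simp [g₁, g₂, hkc, hlow k hkc.le]
    · by_cases hkd : k < d
      · simp [g₁, g₂, hkc, hkd, not_lt.1 hkc]
      · simp [g₁, g₂, hkc, hkd, hhigh k (not_lt.1 hkd)]
  have h₁ : radE s g₁ ≤ ‖v c‖ := by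
    refine (radE_smul_const_le s _ (v c)).trans (mul_le_of_le_one_left (norm_nonneg _) ?_)
    refine Real.sqrt_le_one.2 ((Finset.sum_le_sum fun k _ => ?_).trans hμ)
    split_ifs <;> simp [sq_nonneg]
  have h₂ : radE s g₂ ≤ ∑ k ∈ Finset.Ico c d, ‖v k‖ := by
    have hμ1 (k : ℤ) (hk : k ∈ s) : |μ k| ≤ 1 := (sq_le_one_iff_abs_le_one _).1
      ((Finset.single_le_sum (fun i _ => sq_nonneg (μ i)) hk).trans hμ)
    calc radE s g₂ ≤ ∑ k ∈ s, ‖g₂ k‖ := radE_le_sum_norm s g₂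
      _ ≤ ∑ k ∈ s, if k ∈ Finset.Ico c d then ‖v k‖ else 0 := Finset.sum_le_sum fun k hk => by
          simp only [g₂]
          split_ifs
          · rw [norm_smul, Real.norm_eq_abs]
            exact mul_le_of_le_one_left (norm_nonneg _) (hμ1 k hk)
          · simp
      _ = ∑ k ∈ s ∩ Finset.Ico c d, ‖v k‖ := Finset.sum_ite_mem _ _ _
      _ ≤ ∑ k ∈ Finset.Ico c d, ‖v k‖ :=
          Finset.sum_le_sum_of_subset_of_nonneg Finset.inter_subset_right fun _ _ _ => norm_nonneg _
  rw [hsplit]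
  exact (radE_add_le _ _ _).trans (add_le_add h₁ h₂)

lemma ofReal_iSup_le_iSup_ofReal {ι : Sort*} (g : ι → ℝ) :
    ENNReal.ofReal (⨆ i, g i) ≤ ⨆ i, ENNReal.ofReal (g i) := by
  rcases eq_or_ne (⨆ i, ENNReal.ofReal (g i)) ⊤ with htop | htop
  · exact htop ▸ le_top
  · rw [ENNReal.ofReal_le_iff_le_toReal htop]
    exact Real.iSup_le (fun i => (ENNReal.ofReal_le_iff_le_toReal htop).1
      (le_iSup (fun i => ENNReal.ofReal (g i)) i))
      ENNReal.toReal_nonneg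

section RademacherSup

variable {X : Type*} [NormedAddCommGroup X] [NormedSpace ℝ X]

/-- Unlike the real supremum in `rademacherMaximal`, this is `∞`, not a junk value, where the
Rademacher sums are unbounded. -/
def rademacherSup (S : Set ℤ) (v : ℤ → X) : ℝ≥0∞ :=
  ⨆ (q : Finset ℤ × (ℤ → ℝ)) (_ : ↑q.1 ⊆ S ∧ ∑ k ∈ q.1, q.2 k ^ 2 ≤ 1),
    ENNReal.ofReal (radE q.1 fun k => q.2 k • v k)

lemma rademacherSup_mono {S T : Set ℤ} (h : S ⊆ T) (v : ℤ → X) :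
    rademacherSup S v ≤ rademacherSup T v :=
  biSup_mono fun _ hq => ⟨hq.1.trans h, hq.2⟩

lemma rademacherSup_congr {S : Set ℤ} {v w : ℤ → X} (h : ∀ k ∈ S, v k = w k) :
    rademacherSup S v = rademacherSup S w :=
  iSup_congr fun _ => iSup_congr fun hq => by rw [radE_congr fun k hk => by rw [h k (hq.1 hk)]]

lemma rademacherSup_eq_zero {S : Set ℤ} {v : ℤ → X} (h : ∀ k ∈ S, v k = 0) :
    rademacherSup S v = 0 :=
  le_antisymm (iSup₂_le fun _ hq => by
    rw [radE_eq_zero fun k hk => by rw [h k (hq.1 hk), smul_zero], ENNReal.ofReal_zero]) bot_le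

lemma rademacherSup_univ_eq_iSup_Icc (v : ℤ → X) :
    rademacherSup Set.univ v = ⨆ K : ℕ, rademacherSup (Set.Icc (-K : ℤ) K) v := by
  refine le_antisymm (iSup₂_le fun q hq => ?_)
    (iSup_le fun K => rademacherSup_mono (Set.subset_univ _) v)
  set K := q.1.sup Int.natAbs
  have hsub : ↑q.1 ⊆ Set.Icc (-K : ℤ) K := fun k hk => by
    have : k.natAbs ≤ K := Finset.le_sup (f := Int.natAbs) hk
    rw [Set.mem_Icc]
    omega
  exact le_iSup_of_le K (le_iSup₂_of_le q ⟨hsub, hq.2⟩ le_rfl)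

lemma monotone_rademacherSup_Icc (v : ℤ → X) :
    Monotone fun K : ℕ => rademacherSup (Set.Icc (-K : ℤ) K) v :=
  fun _ _ hKK' => rademacherSup_mono (Set.Icc_subset_Icc (by omega) (by omega)) v

lemma rademacherSup_sum_smul_le {κ : Type*} (t : Finset κ) (c : κ → ℝ) (S : Set ℤ)
    (v : κ → ℤ → X) :
    rademacherSup S (fun k => ∑ j ∈ t, c j • v j k)
      ≤ ∑ j ∈ t, ENNReal.ofReal |c j| * rademacherSup S (v j) := by
  refine iSup₂_le fun q hq => ?_
  have hsplit : (fun k => q.2 k • ∑ j ∈ t, c j • v j k)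
      = ∑ j ∈ t, c j • fun k => q.2 k • v j k := by
    ext k
    simp [Finset.smul_sum, smul_comm (q.2 k)]
  calc ENNReal.ofReal (radE q.1 fun k => q.2 k • ∑ j ∈ t, c j • v j k)
      ≤ ENNReal.ofReal (∑ j ∈ t, |c j| * radE q.1 fun k => q.2 k • v j k) := by
        rw [hsplit]
        gcongr
        refine (radE_sum_le _ _ _).trans_eq (Finset.sum_congr rfl fun j _ => radE_smul _ _ _)
    _ = ∑ j ∈ t, ENNReal.ofReal |c j| * ENNReal.ofReal (radE q.1 fun k => q.2 k • v j k) := by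
        rw [ENNReal.ofReal_sum_of_nonneg fun j _ => mul_nonneg (abs_nonneg _) (radE_nonneg _ _)]
        simp_rw [ENNReal.ofReal_mul (abs_nonneg _)]
    _ ≤ ∑ j ∈ t, ENNReal.ofReal |c j| * rademacherSup S (v j) := by
        gcongr with j
        exact le_iSup₂_of_le q hq le_rfl

end RademacherSup

section Dyadic

variable {n : ℕ}

def dyadicIndex (n : ℕ) (k : ℤ) (x : Fin n → ℝ) : Fin n → ℤ := fun i => ⌊x i / (2 : ℝ) ^ k⌋

lemma mem_dyadicCube_iff {k : ℤ} {m : Fin n → ℤ} {x : Fin n → ℝ} :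
    x ∈ dyadicCube n k m ↔ dyadicIndex n k x = m := by
  have h2k : (0 : ℝ) < 2 ^ k := by positivity
  simp only [dyadicCube, dyadicIndex, funext_iff, Int.floor_eq_iff,
    le_div_iff₀ h2k, div_lt_iff₀ h2k, mul_comm]
  rfl

lemma mem_dyadicCube_dyadicIndex (k : ℤ) (x : Fin n → ℝ) :
    x ∈ dyadicCube n k (dyadicIndex n k x) :=
  mem_dyadicCube_iff.2 rfl

lemma dyadicIndex_of_le {k k' : ℤ} (h : k ≤ k') (x : Fin n → ℝ) :
    dyadicIndex n k' x = fun i => dyadicIndex n k x i / 2 ^ (k' - k).toNat := by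
  have h2 : (2 : ℝ) ^ k' = 2 ^ k * ((2 ^ (k' - k).toNat : ℕ) : ℝ) := by
    rw [Nat.cast_pow, Nat.cast_ofNat, ← zpow_natCast, Int.toNat_of_nonneg (by omega),
      ← zpow_add₀ two_ne_zero, add_sub_cancel]
  ext i
  simp only [dyadicIndex, h2, ← div_div]
  exact_mod_cast Int.floor_div_natCast (x i / 2 ^ k) (2 ^ (k' - k).toNat)

lemma dyadicIndex_eq_of_le {k k' : ℤ} (h : k ≤ k') {x y : Fin n → ℝ}
    (hxy : dyadicIndex n k x = dyadicIndex n k y) : dyadicIndex n k' x = dyadicIndex n k' y := by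
  rw [dyadicIndex_of_le h, dyadicIndex_of_le h, hxy]

lemma dyadicCube_subset_or_disjoint {k k' : ℤ} (h : k ≤ k') (m m' : Fin n → ℤ) :
    dyadicCube n k m ⊆ dyadicCube n k' m' ∨ Disjoint (dyadicCube n k m) (dyadicCube n k' m') := by
  refine or_iff_not_imp_right.2 fun hmeet => ?_
  obtain ⟨y, hy, hy'⟩ := Set.not_disjoint_iff.1 hmeet
  intro z hz
  rw [mem_dyadicCube_iff] at hy hy' hz ⊢
  rw [← hy', dyadicIndex_eq_of_le h (hz.trans hy.symm)]

lemma iUnion_dyadicCube (k : ℤ) : ⋃ m, dyadicCube n k m = Set.univ :=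
  Set.eq_univ_of_forall fun x => Set.mem_iUnion.2 ⟨_, mem_dyadicCube_dyadicIndex k x⟩

lemma pairwise_disjoint_dyadicCube (k : ℤ) : Pairwise (Function.onFun Disjoint (dyadicCube n k)) :=
  fun _ _ hmm' => Set.disjoint_left.2 fun _ hx hx' =>
    hmm' ((mem_dyadicCube_iff.1 hx).symm.trans (mem_dyadicCube_iff.1 hx'))

lemma dyadicCube_eq_pi (k : ℤ) (m : Fin n → ℤ) :
    dyadicCube n k m = Set.univ.pi fun i => Set.Ico (2 ^ k * (m i : ℝ)) (2 ^ k * (m i + 1)) := by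
  ext x
  simp [dyadicCube, Set.mem_pi]

lemma measurableSet_dyadicCube (k : ℤ) (m : Fin n → ℤ) : MeasurableSet (dyadicCube n k m) := by
  rw [dyadicCube_eq_pi]
  exact MeasurableSet.univ_pi fun _ => measurableSet_Ico

lemma volume_dyadicCube (k : ℤ) (m : Fin n → ℤ) :
    volume (dyadicCube n k m) = ENNReal.ofReal (2 ^ k) ^ n := by
  simp [dyadicCube_eq_pi, Real.volume_pi_Ico, mul_add]

lemma volume_dyadicCube_ne_zero (k : ℤ) (m : Fin n → ℤ) : volume (dyadicCube n k m) ≠ 0 := by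
  simp [volume_dyadicCube, zpow_pos]

lemma volume_dyadicCube_ne_top (k : ℤ) (m : Fin n → ℤ) : volume (dyadicCube n k m) ≠ ⊤ := by
  simp [volume_dyadicCube]

lemma measurable_dyadicIndex (k : ℤ) : Measurable (dyadicIndex n k) :=
  measurable_pi_lambda _ fun i => ((measurable_pi_apply i).div_const _).floor

end Dyadic

section Averages

variable {n : ℕ} {X : Type*} [NormedAddCommGroup X] [NormedSpace ℝ X]

lemma norm_setAvg_le {S : Set (Fin n → ℝ)} (h0 : volume S ≠ 0) (htop : volume S ≠ ⊤)
    {u : (Fin n → ℝ) → X} {M : ℝ} (hM : ∀ y ∈ S, ‖u y‖ ≤ M) : ‖setAvg n S u‖ ≤ M := by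
  have hS := ENNReal.toReal_pos h0 htop
  rw [setAvg, norm_smul, norm_inv, Real.norm_of_nonneg hS.le, inv_mul_le_iff₀ hS, mul_comm]
  exact norm_setIntegral_le_of_norm_le_const htop.lt_top hM

lemma norm_setAvg_le_integral_norm (S : Set (Fin n → ℝ)) {u : (Fin n → ℝ) → X}
    (hu : Integrable u) : ‖setAvg n S u‖ ≤ (volume S).toReal⁻¹ * ∫ y, ‖u y‖ := by
  rw [setAvg, norm_smul, norm_inv, Real.norm_of_nonneg ENNReal.toReal_nonneg]
  gcongr
  exact (norm_integral_le_integral_norm _).trans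
    (setIntegral_le_integral hu.norm (.of_forall fun _ => norm_nonneg _))

lemma setAvg_sum_smul {ι : Type*} (t : Finset ι) (c : ι → ℝ) (u : ι → (Fin n → ℝ) → X)
    {S : Set (Fin n → ℝ)} (hu : ∀ j ∈ t, IntegrableOn (u j) S) :
    setAvg n S (fun y => ∑ j ∈ t, c j • u j y) = ∑ j ∈ t, c j • setAvg n S (u j) := by
  rw [setAvg, integral_finsetSum (f := fun j y => c j • u j y) t fun j hj => (hu j hj).smul (c j),
    Finset.smul_sum]
  simp only [setAvg, integral_smul, smul_comm (volume S).toReal⁻¹]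

lemma dyadicAvg_eq_zero_of_not_completeSpace (hX : ¬CompleteSpace X) (u : (Fin n → ℝ) → X)
    (k : ℤ) (x : Fin n → ℝ) : dyadicAvg n u k x = 0 := by
  rw [dyadicAvg, setAvg, integral_of_not_completeSpace hX, smul_zero]

lemma dyadicAvg_eq_setAvg (u : (Fin n → ℝ) → X) (k : ℤ) (x : Fin n → ℝ) :
    dyadicAvg n u k x = setAvg n (dyadicCube n k (dyadicIndex n k x)) u :=
  rfl

lemma dyadicAvg_eq_of_mem (u : (Fin n → ℝ) → X) {k : ℤ} {m : Fin n → ℤ} {x : Fin n → ℝ}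
    (hx : x ∈ dyadicCube n k m) : dyadicAvg n u k x = setAvg n (dyadicCube n k m) u := by
  rw [dyadicAvg_eq_setAvg, mem_dyadicCube_iff.1 hx]

lemma norm_dyadicAvg_le {u : (Fin n → ℝ) → X} {M : ℝ} (hM : ∀ y, ‖u y‖ ≤ M) (k : ℤ)
    (x : Fin n → ℝ) : ‖dyadicAvg n u k x‖ ≤ M :=
  norm_setAvg_le (volume_dyadicCube_ne_zero _ _) (volume_dyadicCube_ne_top _ _) fun y _ => hM y

lemma dyadicAvg_sum_smul {ι : Type*} (t : Finset ι) (c : ι → ℝ) {u : ι → (Fin n → ℝ) → X}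
    (hu : ∀ j ∈ t, Integrable (u j)) (k : ℤ) (x : Fin n → ℝ) :
    dyadicAvg n (fun y => ∑ j ∈ t, c j • u j y) k x = ∑ j ∈ t, c j • dyadicAvg n (u j) k x :=
  setAvg_sum_smul t c u fun j hj => (hu j hj).integrableOn

lemma stronglyMeasurable_dyadicAvg (u : (Fin n → ℝ) → X) (k : ℤ) :
    StronglyMeasurable (dyadicAvg n u k) :=
  (StronglyMeasurable.of_discrete (f := fun m => setAvg n (dyadicCube n k m) u)).comp_measurable
    (measurable_dyadicIndex k)

lemma integrableOn_dyadicAvg {u : (Fin n → ℝ) → X} (hu : Integrable u) (c k : ℤ)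
    (m : Fin n → ℤ) : IntegrableOn (dyadicAvg n u c) (dyadicCube n k m) :=
  Measure.integrableOn_of_bounded (volume_dyadicCube_ne_top k m)
    (stronglyMeasurable_dyadicAvg u c).aestronglyMeasurable
    (M := (volume (dyadicCube n c 0)).toReal⁻¹ * ∫ y, ‖u y‖) <| .of_forall fun _ =>
      (norm_setAvg_le_integral_norm _ hu).trans_eq (by rw [volume_dyadicCube, volume_dyadicCube])

variable [CompleteSpace X]

lemma setAvg_eq_of_forall_eq {S : Set (Fin n → ℝ)} (hS : MeasurableSet S) (h0 : volume S ≠ 0)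
    (htop : volume S ≠ ⊤) {u : (Fin n → ℝ) → X} {w : X} (h : ∀ y ∈ S, u y = w) :
    setAvg n S u = w := by
  rw [setAvg, setIntegral_congr_fun hS h, setIntegral_const, smul_smul, measureReal_def,
    inv_mul_cancel₀ (ENNReal.toReal_pos h0 htop).ne', one_smul]

lemma setIntegral_dyadicAvg_self (u : (Fin n → ℝ) → X) (c : ℤ) (m : Fin n → ℤ) :
    ∫ y in dyadicCube n c m, dyadicAvg n u c y = ∫ y in dyadicCube n c m, u y := by
  rw [setIntegral_congr_fun (measurableSet_dyadicCube c m) fun y hy => dyadicAvg_eq_of_mem u hy,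
    setIntegral_const, setAvg, smul_smul, measureReal_def,
    mul_inv_cancel₀ (ENNReal.toReal_pos (volume_dyadicCube_ne_zero c m)
      (volume_dyadicCube_ne_top c m)).ne', one_smul]

lemma setIntegral_dyadicAvg_of_le {u : (Fin n → ℝ) → X} (hu : Integrable u) {c k : ℤ}
    (h : c ≤ k) (m : Fin n → ℤ) :
    ∫ y in dyadicCube n k m, dyadicAvg n u c y = ∫ y in dyadicCube n k m, u y := by
  set P : (Fin n → ℤ) → Set (Fin n → ℝ) := fun m' => dyadicCube n c m' ∩ dyadicCube n k m
  have hP : dyadicCube n k m = ⋃ m', P m' := by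
    rw [← Set.iUnion_inter, iUnion_dyadicCube, Set.univ_inter]
  have hPm (m' : Fin n → ℤ) : MeasurableSet (P m') :=
    (measurableSet_dyadicCube c m').inter (measurableSet_dyadicCube k m)
  have hPd : Pairwise (Function.onFun Disjoint P) := fun _ _ h =>
    (pairwise_disjoint_dyadicCube c h).mono Set.inter_subset_left Set.inter_subset_left
  rw [hP, integral_iUnion hPm hPd (hP ▸ integrableOn_dyadicAvg hu c k m),
    integral_iUnion hPm hPd (hP ▸ hu.integrableOn)]
  refine tsum_congr fun m' => ?_
  rcases dyadicCube_subset_or_disjoint h m' m with hsub | hdisj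
  · simp only [P, Set.inter_eq_left.2 hsub, setIntegral_dyadicAvg_self]
  · simp [P, hdisj.inter_eq]

lemma dyadicAvg_dyadicAvg_of_le {u : (Fin n → ℝ) → X} (hu : Integrable u) {c k : ℤ} (h : c ≤ k)
    (x : Fin n → ℝ) : dyadicAvg n (dyadicAvg n u c) k x = dyadicAvg n u k x := by
  rw [dyadicAvg_eq_setAvg (dyadicAvg n u c), dyadicAvg_eq_setAvg u k, setAvg, setAvg,
    setIntegral_dyadicAvg_of_le hu h]

lemma dyadicAvg_dyadicAvg_of_ge (u : (Fin n → ℝ) → X) {c k : ℤ} (h : k ≤ c) (x : Fin n → ℝ) :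
    dyadicAvg n (dyadicAvg n u c) k x = dyadicAvg n u c x :=
  setAvg_eq_of_forall_eq (measurableSet_dyadicCube _ _) (volume_dyadicCube_ne_zero _ _)
    (volume_dyadicCube_ne_top _ _) fun y hy => by
      rw [dyadicAvg_eq_setAvg, dyadicAvg_eq_setAvg,
        dyadicIndex_eq_of_le h (mem_dyadicCube_iff.1 hy)]

end Averages

section RademacherMaximal

variable {n : ℕ} {X : Type*} [NormedAddCommGroup X] [NormedSpace ℝ X]

lemma measurable_rademacherSup_dyadicAvg (F : Finset ℤ) (u : (Fin n → ℝ) → X) :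
    Measurable fun x => rademacherSup ↑F fun k => dyadicAvg n u k x := by
  let Ψ : (F → Fin n → ℤ) → ℝ≥0∞ := fun m => rademacherSup ↑F fun k =>
    if hk : k ∈ F then setAvg n (dyadicCube n k (m ⟨k, hk⟩)) u else 0
  have hΦ : Measurable fun x (k : F) => dyadicIndex n k x :=
    measurable_pi_lambda _ fun k => measurable_dyadicIndex k.1
  convert (measurable_of_countable Ψ).comp hΦ using 1
  ext x
  exact rademacherSup_congr fun k hk => by simp [Finset.mem_coe.1 hk, dyadicAvg_eq_setAvg]

lemma measurable_rademacherSup_univ_dyadicAvg (u : (Fin n → ℝ) → X) :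
    Measurable fun x => rademacherSup Set.univ fun k => dyadicAvg n u k x := by
  simp_rw [rademacherSup_univ_eq_iSup_Icc]
  refine .iSup fun K => ?_
  simpa using measurable_rademacherSup_dyadicAvg (Finset.Icc (-K : ℤ) K) u

lemma rademacherMaximal_nonneg (u : (Fin n → ℝ) → X) (x : Fin n → ℝ) :
    0 ≤ rademacherMaximal n u x :=
  Real.iSup_nonneg fun _ => radE_nonneg _ _

lemma eLpNorm_one_rademacherMaximal_le (u : (Fin n → ℝ) → X) :
    eLpNorm (rademacherMaximal n u) 1 volume
      ≤ ∫⁻ x, rademacherSup Set.univ fun k => dyadicAvg n u k x := by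
  rw [eLpNorm_one_eq_lintegral_enorm]
  refine lintegral_mono fun x => ?_
  rw [Real.enorm_eq_ofReal (rademacherMaximal_nonneg u x)]
  exact (ofReal_iSup_le_iSup_ofReal _).trans
    (iSup_le fun q => le_iSup₂_of_le q.1 ⟨Set.subset_univ _, q.2⟩ le_rfl)

lemma rademacherSup_le_ofReal_rademacherMaximal (S : Set ℤ) {u : (Fin n → ℝ) → X}
    {x : Fin n → ℝ}
    (hb : BddAbove (Set.range fun q : {q : Finset ℤ × (ℤ → ℝ) // ∑ k ∈ q.1, q.2 k ^ 2 ≤ 1} =>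
      radE q.1.1 fun k => q.1.2 k • dyadicAvg n u k x)) :
    rademacherSup S (fun k => dyadicAvg n u k x) ≤ ENNReal.ofReal (rademacherMaximal n u x) :=
  iSup₂_le fun q hq => ENNReal.ofReal_le_ofReal (le_ciSup hb ⟨q, hq.2⟩)

end RademacherMaximal

section Atoms

variable {n : ℕ} {X : Type*} [NormedAddCommGroup X] [NormedSpace ℝ X]

structure IsDyadicAtom (a : (Fin n → ℝ) → X) (k : ℤ) (m : Fin n → ℤ) : Prop where
  aestronglyMeasurable : AEStronglyMeasurable a
  support_subset : Function.support a ⊆ dyadicCube n k m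
  norm_le : ∀ x, ‖a x‖ ≤ (volume (dyadicCube n k m)).toReal⁻¹
  integral_eq_zero : ∫ x, a x = 0

namespace IsDyadicAtom

variable {a : (Fin n → ℝ) → X} {kQ : ℤ} {mQ : Fin n → ℤ}

lemma eq_zero_of_notMem (ha : IsDyadicAtom a kQ mQ) {x : Fin n → ℝ}
    (hx : x ∉ dyadicCube n kQ mQ) : a x = 0 :=
  Function.notMem_support.1 fun h => hx (ha.support_subset h)

lemma integrable (ha : IsDyadicAtom a kQ mQ) : Integrable a :=
  (Measure.integrableOn_of_bounded (volume_dyadicCube_ne_top kQ mQ) ha.aestronglyMeasurable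
    (.of_forall ha.norm_le)).integrable_of_forall_notMem_eq_zero fun _ => ha.eq_zero_of_notMem

/-- Dyadic cubes are nested or disjoint, and if `Q ⊆ Q'` the average over `Q'` is a multiple of
`∫ a = 0`. -/
lemma dyadicAvg_eq_zero (ha : IsDyadicAtom a kQ mQ) {k : ℤ} {x : Fin n → ℝ}
    (h : kQ ≤ k ∨ x ∉ dyadicCube n kQ mQ) : dyadicAvg n a k x = 0 := by
  suffices ∫ y in dyadicCube n k (dyadicIndex n k x), a y = 0 by
    rw [dyadicAvg_eq_setAvg, setAvg, this, smul_zero]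
  have hdisj {S : Set (Fin n → ℝ)} (hS : Disjoint S (dyadicCube n kQ mQ)) : ∫ y in S, a y = 0 :=
    setIntegral_eq_zero_of_forall_eq_zero fun y hy =>
      ha.eq_zero_of_notMem (Set.disjoint_left.1 hS hy)
  rcases lt_or_ge k kQ with hk | hk
  · rcases dyadicCube_subset_or_disjoint hk.le (dyadicIndex n k x) mQ with hsub | hd
    · exact absurd (hsub (mem_dyadicCube_dyadicIndex k x)) (h.resolve_left hk.not_ge)
    · exact hdisj hd
  · rcases dyadicCube_subset_or_disjoint hk mQ (dyadicIndex n k x) with hsub | hd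
    · rw [setIntegral_eq_integral_of_forall_compl_eq_zero fun y hy =>
        ha.eq_zero_of_notMem fun hyQ => hy (hsub hyQ), ha.integral_eq_zero]
    · exact hdisj hd.symm

end IsDyadicAtom

end Atoms

lemma lintegral_le_eLpNorm_mul_rpow_of_support_subset {α : Type*} [MeasurableSpace α]
    {μ : Measure α} {q : ℝ≥0∞} (hq : 1 ≤ q) {f : α → ℝ≥0∞} (hf : Measurable f) {S : Set α}
    (hS : Function.support f ⊆ S) : ∫⁻ x, f x ∂μ ≤ eLpNorm f q μ * μ S ^ (1 - 1 / q.toReal) := by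
  calc ∫⁻ x, f x ∂μ = eLpNorm f 1 (μ.restrict S) := by
        simp only [eLpNorm_one_eq_lintegral_enorm, enorm_eq_self,
          setLIntegral_eq_of_support_subset hS]
    _ ≤ eLpNorm f q (μ.restrict S) * μ S ^ (1 - 1 / q.toReal) := by
        simpa using eLpNorm_le_eLpNorm_mul_rpow_measure_univ (μ := μ.restrict S) hq
          hf.aestronglyMeasurable
    _ ≤ eLpNorm f q μ * μ S ^ (1 - 1 / q.toReal) := by
        gcongr
        exact Measure.restrict_le_self

section AtomicEstimate

variable {n : ℕ} {X : Type*} [NormedAddCommGroup X] [NormedSpace ℝ X] {q C : ℝ≥0∞}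

lemma IsDyadicAtom.eLpNorm_dyadicAvg_le {a : (Fin n → ℝ) → X} {kQ : ℤ} {mQ : Fin n → ℤ}
    (ha : IsDyadicAtom a kQ mQ) (c : ℤ) :
    eLpNorm (dyadicAvg n a c) q
      ≤ volume (dyadicCube n kQ mQ) ^ (1 / q.toReal) * (volume (dyadicCube n kQ mQ))⁻¹ := by
  have hsupp : Function.support (dyadicAvg n a c) ⊆ dyadicCube n kQ mQ := fun y hy => by
    by_contra hyQ
    exact hy (ha.dyadicAvg_eq_zero (Or.inr hyQ))
  rw [← eLpNorm_restrict_eq_of_support_subset hsupp]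
  refine (eLpNorm_le_of_ae_bound (.of_forall (norm_dyadicAvg_le ha.norm_le c))).trans_eq ?_
  rw [Measure.restrict_apply_univ, ENNReal.ofReal_inv_of_pos
    (ENNReal.toReal_pos (volume_dyadicCube_ne_zero kQ mQ) (volume_dyadicCube_ne_top kQ mQ)),
    ENNReal.ofReal_toReal (volume_dyadicCube_ne_top kQ mQ), one_div]

lemma IsDyadicAtom.memLp_dyadicAvg {a : (Fin n → ℝ) → X} {kQ : ℤ} {mQ : Fin n → ℤ}
    (ha : IsDyadicAtom a kQ mQ) (c : ℤ) : MemLp (dyadicAvg n a c) q :=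
  ⟨(stronglyMeasurable_dyadicAvg a c).aestronglyMeasurable, (ha.eLpNorm_dyadicAvg_le c).trans_lt
    (ENNReal.mul_lt_top (ENNReal.rpow_lt_top_of_nonneg (by positivity)
      (volume_dyadicCube_ne_top kQ mQ)) (ENNReal.inv_lt_top.2
        (pos_iff_ne_zero.2 (volume_dyadicCube_ne_zero kQ mQ))))⟩

/-- The Rademacher sums of the step function `A_c a` are bounded, so the real supremum
`rademacherMaximal` is not a junk value there. -/
lemma IsDyadicAtom.rademacherSup_le_rademacherMaximal_dyadicAvg [CompleteSpace X]
    {a : (Fin n → ℝ) → X} {kQ : ℤ} {mQ : Fin n → ℤ} (ha : IsDyadicAtom a kQ mQ) {S : Set ℤ}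
    {c : ℤ} (hS : ∀ k ∈ S, c ≤ k) (hc : c ≤ kQ) (x : Fin n → ℝ) :
    rademacherSup S (fun k => dyadicAvg n a k x)
      ≤ ENNReal.ofReal (rademacherMaximal n (dyadicAvg n a c) x) := by
  have hlow : ∀ k ≤ c, dyadicAvg n (dyadicAvg n a c) k x = dyadicAvg n (dyadicAvg n a c) c x :=
    fun k hk => by rw [dyadicAvg_dyadicAvg_of_ge a hk, dyadicAvg_dyadicAvg_of_ge a le_rfl]
  have hhigh : ∀ k, kQ ≤ k → dyadicAvg n (dyadicAvg n a c) k x = 0 := fun k hk => by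
    rw [dyadicAvg_dyadicAvg_of_le ha.integrable (hc.trans hk)]
    exact ha.dyadicAvg_eq_zero (Or.inl hk)
  calc rademacherSup S (fun k => dyadicAvg n a k x)
      = rademacherSup S (fun k => dyadicAvg n (dyadicAvg n a c) k x) :=
        rademacherSup_congr fun k hk => (dyadicAvg_dyadicAvg_of_le ha.integrable (hS k hk) x).symm
    _ ≤ ENNReal.ofReal (rademacherMaximal n (dyadicAvg n a c) x) :=
        rademacherSup_le_ofReal_rademacherMaximal _ (bddAbove_radE_of_eventually_const hlow hhigh)

lemma lintegral_rademacherSup_Icc_atom_le [CompleteSpace X] (hq : 1 ≤ q)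
    (hbound : ∀ u : (Fin n → ℝ) → X, MemLp u q →
      eLpNorm (rademacherMaximal n u) q ≤ C * eLpNorm u q)
    {a : (Fin n → ℝ) → X} {kQ : ℤ} {mQ : Fin n → ℤ} (ha : IsDyadicAtom a kQ mQ) (K : ℕ) :
    ∫⁻ x, rademacherSup (Set.Icc (-K : ℤ) K) (fun k => dyadicAvg n a k x) ≤ C := by
  set V := volume (dyadicCube n kQ mQ)
  have hV0 : V ≠ 0 := volume_dyadicCube_ne_zero kQ mQ
  have hVtop : V ≠ ⊤ := volume_dyadicCube_ne_top kQ mQ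
  set c := min (-K : ℤ) kQ
  set F := fun x => rademacherSup (Set.Icc (-K : ℤ) K) (fun k => dyadicAvg n a k x)
  have hF_supp : Function.support F ⊆ dyadicCube n kQ mQ := fun x hx => by
    by_contra hxQ
    exact hx (rademacherSup_eq_zero fun k _ => ha.dyadicAvg_eq_zero (Or.inr hxQ))
  have hF_meas : Measurable F := by
    simpa using measurable_rademacherSup_dyadicAvg (Finset.Icc (-K : ℤ) K) a
  calc ∫⁻ x, F x ≤ eLpNorm F q volume * V ^ (1 - 1 / q.toReal) :=
        lintegral_le_eLpNorm_mul_rpow_of_support_subset hq hF_meas hF_supp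
    _ ≤ eLpNorm (rademacherMaximal n (dyadicAvg n a c)) q volume * V ^ (1 - 1 / q.toReal) := by
        gcongr
        refine eLpNorm_mono_enorm fun x => ?_
        rw [enorm_eq_self, Real.enorm_eq_ofReal (rademacherMaximal_nonneg _ x)]
        exact ha.rademacherSup_le_rademacherMaximal_dyadicAvg
          (fun k hk => (min_le_left _ _).trans hk.1) (min_le_right _ _) x
    _ ≤ C * (V ^ (1 / q.toReal) * V⁻¹) * V ^ (1 - 1 / q.toReal) := by
        gcongr
        exact (hbound _ (ha.memLp_dyadicAvg c)).trans (by gcongr; exact ha.eLpNorm_dyadicAvg_le c)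
    _ = C := by
        rw [← ENNReal.rpow_neg_one, mul_assoc, ← ENNReal.rpow_add _ _ hV0 hVtop,
          ← ENNReal.rpow_add _ _ hV0 hVtop]
        ring_nf
        simp

lemma lintegral_rademacherSup_atom_le (hq : 1 ≤ q)
    (hbound : ∀ u : (Fin n → ℝ) → X, MemLp u q →
      eLpNorm (rademacherMaximal n u) q ≤ C * eLpNorm u q)
    {a : (Fin n → ℝ) → X} {kQ : ℤ} {mQ : Fin n → ℤ} (ha : IsDyadicAtom a kQ mQ) :
    ∫⁻ x, rademacherSup Set.univ (fun k => dyadicAvg n a k x) ≤ C := by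
  by_cases hX : CompleteSpace X
  · have hmeas (K : ℕ) : Measurable fun x =>
        rademacherSup (Set.Icc (-K : ℤ) K) fun k => dyadicAvg n a k x := by
      simpa using measurable_rademacherSup_dyadicAvg (Finset.Icc (-K : ℤ) K) a
    simp_rw [rademacherSup_univ_eq_iSup_Icc]
    rw [lintegral_iSup hmeas fun _ _ hKK' x => monotone_rademacherSup_Icc _ hKK']
    exact iSup_le (lintegral_rademacherSup_Icc_atom_le hq hbound ha)
  · simp [rademacherSup_eq_zero fun k _ => dyadicAvg_eq_zero_of_not_completeSpace hX a k _]

lemma eLpNorm_rademacherMaximal_sum_atoms_le (hq : 1 ≤ q)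
    (hbound : ∀ u : (Fin n → ℝ) → X, MemLp u q →
      eLpNorm (rademacherMaximal n u) q ≤ C * eLpNorm u q)
    {ι : Type*} (t : Finset ι) (c : ι → ℝ) {a : ι → (Fin n → ℝ) → X} {k : ι → ℤ}
    {m : ι → Fin n → ℤ} (ha : ∀ j ∈ t, IsDyadicAtom (a j) (k j) (m j)) :
    eLpNorm (rademacherMaximal n fun x => ∑ j ∈ t, c j • a j x) 1 volume
      ≤ ∑ j ∈ t, ENNReal.ofReal |c j| * C := by
  have hint (j) (hj : j ∈ t) : Integrable (a j) := (ha j hj).integrable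
  calc eLpNorm (rademacherMaximal n fun x => ∑ j ∈ t, c j • a j x) 1 volume
      ≤ ∫⁻ x, rademacherSup Set.univ fun k => dyadicAvg n (fun y => ∑ j ∈ t, c j • a j y) k x :=
        eLpNorm_one_rademacherMaximal_le _
    _ ≤ ∫⁻ x, ∑ j ∈ t, ENNReal.ofReal |c j| *
          rademacherSup Set.univ fun k => dyadicAvg n (a j) k x := lintegral_mono fun x => by
        simp_rw [dyadicAvg_sum_smul t c hint]
        exact rademacherSup_sum_smul_le t c _ _
    _ = ∑ j ∈ t, ENNReal.ofReal |c j| *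
          ∫⁻ x, rademacherSup Set.univ fun k => dyadicAvg n (a j) k x := by
        rw [lintegral_finsetSum _ fun j _ =>
          (measurable_rademacherSup_univ_dyadicAvg (a j)).const_mul _]
        simp_rw [lintegral_const_mul _ (measurable_rademacherSup_univ_dyadicAvg _)]
    _ ≤ ∑ j ∈ t, ENNReal.ofReal |c j| * C := by
        gcongr with j hj
        exact lintegral_rademacherSup_atom_le hq hbound (ha j hj)

end AtomicEstimate

/-- Atomic estimate for the (linearized) Rademacher maximal operator: if `M_R` is bounded on
`L^p(ℝⁿ;X)` for some `p ∈ (1,∞)`, then for every dyadic atom `a` (supported in a dyadic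
cube `Q`, with `‖a‖_∞ ≤ |Q|⁻¹` and `∫ a = 0`) one has `‖M_R a‖_{L¹} ≲ 1`, and consequently
`M_R` maps the dyadic atomic `H¹(ℝⁿ;X)` boundedly into `L¹(ℝⁿ)`. -/
theorem rademacherMaximal_atom_bound (n : ℕ) {X : Type*}
    [NormedAddCommGroup X] [NormedSpace ℝ X]
    (p : ℝ) (hp : 1 < p)
    (hbound : ∃ C : ℝ, 0 < C ∧ ∀ u : (Fin n → ℝ) → X,
      MemLp u (ENNReal.ofReal p) volume →
      eLpNorm (rademacherMaximal n u) (ENNReal.ofReal p) volume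
        ≤ ENNReal.ofReal C * eLpNorm u (ENNReal.ofReal p) volume) :
    ∃ C : ℝ, 0 < C ∧
      ((∀ (k : ℤ) (m : Fin n → ℤ) (a : (Fin n → ℝ) → X),
        MemLp a (ENNReal.ofReal p) volume →
        Function.support a ⊆ dyadicCube n k m →
        (∀ x, ‖a x‖ ≤ ((volume (dyadicCube n k m)).toReal)⁻¹) →
        (∫ x, a x) = 0 →
        eLpNorm (rademacherMaximal n a) 1 volume ≤ ENNReal.ofReal C) ∧
      (∀ (N : ℕ) (c : Fin N → ℝ) (k : Fin N → ℤ) (m : Fin N → Fin n → ℤ)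
          (a : Fin N → (Fin n → ℝ) → X),
        (∀ j, MemLp (a j) (ENNReal.ofReal p) volume) →
        (∀ j, Function.support (a j) ⊆ dyadicCube n (k j) (m j)) →
        (∀ j x, ‖a j x‖ ≤ ((volume (dyadicCube n (k j) (m j))).toReal)⁻¹) →
        (∀ j, (∫ x, a j x) = 0) →
        eLpNorm (rademacherMaximal n (fun x => ∑ j, c j • a j x)) 1 volume
          ≤ ENNReal.ofReal (C * ∑ j, |c j|))) := by
  obtain ⟨C, hC, hbound⟩ := hbound
  have hq : 1 ≤ ENNReal.ofReal p := by simpa using ENNReal.ofReal_le_ofReal hp.le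
  refine ⟨C, hC, fun k m a ha hsupp hnorm hzero => ?_,
    fun N c k m a ha hsupp hnorm hzero => ?_⟩
  · exact (eLpNorm_one_rademacherMaximal_le a).trans
      (lintegral_rademacherSup_atom_le hq hbound ⟨ha.1, hsupp, hnorm, hzero⟩)
  · refine (eLpNorm_rademacherMaximal_sum_atoms_le hq hbound Finset.univ c
      fun j _ => ⟨(ha j).1, hsupp j, hnorm j, hzero j⟩).trans_eq ?_
    rw [ENNReal.ofReal_mul hC.le, ENNReal.ofReal_sum_of_nonneg fun j _ => abs_nonneg (c j),
      Finset.mul_sum]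
    simp_rw [mul_comm]
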